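/- Let P ⊆ ℝ^n be a compact convex set with nonempty interior, let N_m = #((m • P) ∩ ℤ^n), and let ℓ : ℝ^n → ℝ be a linear map. Then lim_{m→∞} (1/(m·N_m)) · Σ_{u ∈ (m • P) ∩ ℤ^n} ℓ(u) = ℓ(b(P)), where b(P) = (1/vol(P)) ∫_P x dx is the centroid of P. -/

import Mathlib

open MeasureTheory Filter Topology Pointwise

/-- The set of lattice points of the `m`-th dilate of `P ⊆ ℝⁿ`, viewed as
integer vectors `u ∈ ℤⁿ` whose real image lies in `m • P`. -/
def latticePointsOfDilate (n : ℕ) (P : Set (Fin n → ℝ)) (m : ℕ) : Set (Fin n → ℤ) :=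
  {u : Fin n → ℤ | (fun i => (u i : ℝ)) ∈ (m : ℝ) • P}

/-- The centroid (barycenter) of a set `P ⊆ ℝⁿ` with respect to Lebesgue measure:
`b(P) = (1 / vol P) ∫_P x dx`. -/
noncomputable def centroid (n : ℕ) (P : Set (Fin n → ℝ)) : Fin n → ℝ :=
  ((volume P).toReal)⁻¹ • ∫ x in P, x

/-! The points `u / m` with `u` a lattice point of `m • P` are exactly `P ∩ m⁻¹ ℤⁿ`, so
`m⁻ⁿ Σ_u F (u / m)` is the Riemann sum of `∫_P F` for the partition of space into cubes of side
`1 / m`. Since the frontier of a convex body is Lebesgue-null, these sums converge to the integral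
(`tendsto_tsum_div_pow_atTop_integral`). Taking `F = ℓ` and `F = 1` and dividing, linearity of `ℓ`
moves the factor `m` out of the sum and turns `(∫_P ℓ) / vol P` into `ℓ (b P)`. -/

theorem smul_intCast_injective (ι : Type*) {c : ℝ} (hc : c ≠ 0) :
    Function.Injective fun u : ι → ℤ => c • fun i => (u i : ℝ) :=
  (smul_right_injective _ hc).comp fun _ _ h => funext fun i => Int.cast_injective (congrFun h i)

section

open Submodule

-- The lattice `ℤ^ι ⊆ ι → ℝ`, written as Mathlib's Riemann-sum theorems write it.
local notation "𝓛" ι:max => (span ℤ (Set.range (Pi.basisFun ℝ ι)) : Set (ι → ℝ))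

theorem finite_inter_smul_span_basisFun {ι : Type*} [Fintype ι] {P : Set (ι → ℝ)}
    (hP : Bornology.IsBounded P) {c : ℝ} (hc : c ≠ 0) : (P ∩ c • 𝓛 ι).Finite := by
  rw [← coe_pointwise_smul, ZSpan.smul _ hc]
  exact ZSpan.setFinite_inter _ hP

variable {n : ℕ} {P : Set (Fin n → ℝ)} {m : ℕ}

theorem image_latticePointsOfDilate (hm : m ≠ 0) :
    (fun u : Fin n → ℤ => (m : ℝ)⁻¹ • fun i => (u i : ℝ)) '' latticePointsOfDilate n P m =
      P ∩ (m : ℝ)⁻¹ • 𝓛 (Fin n) := by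
  have hm' : (m : ℝ) ≠ 0 := Nat.cast_ne_zero.mpr hm
  ext x
  simp only [Set.mem_image, Set.mem_inter_iff, Set.mem_inv_smul_set_iff₀ hm', SetLike.mem_coe,
    Module.Basis.mem_span_iff_repr_mem, Pi.basisFun_repr, latticePointsOfDilate, Set.mem_ofPred_eq]
  constructor
  · rintro ⟨u, hu, rfl⟩
    exact ⟨(Set.mem_smul_set_iff_inv_smul_mem₀ hm' P _).mp hu, fun i => ⟨u i, by simp [hm']⟩⟩
  · rintro ⟨hxP, hx⟩
    choose u hu using hx
    have hux : (fun i => (u i : ℝ)) = (m : ℝ) • x := funext fun i => by simpa using hu i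
    exact ⟨u, hux ▸ Set.smul_mem_smul_set hxP, by rw [hux, inv_smul_smul₀ hm']⟩

theorem finsum_latticePointsOfDilate_eq_tsum (hP : Bornology.IsBounded P) (hm : m ≠ 0)
    (F : (Fin n → ℝ) → ℝ) :
    ∑ᶠ u ∈ latticePointsOfDilate n P m, F ((m : ℝ)⁻¹ • fun i => (u i : ℝ)) =
      ∑' x : ↑(P ∩ (m : ℝ)⁻¹ • 𝓛 (Fin n)), F x := by
  have hm' : (m : ℝ) ≠ 0 := Nat.cast_ne_zero.mpr hm
  rw [← finsum_mem_image (smul_intCast_injective _ (inv_ne_zero hm')).injOn,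
    image_latticePointsOfDilate hm, tsum_subtype, finsum_mem_def, tsum_eq_finsum]
  exact (finite_inter_smul_span_basisFun hP (inv_ne_zero hm')).subset Set.support_indicator_subset

theorem ncard_latticePointsOfDilate (hm : m ≠ 0) :
    (latticePointsOfDilate n P m).ncard = Nat.card ↑(P ∩ (m : ℝ)⁻¹ • 𝓛 (Fin n)) := by
  rw [← image_latticePointsOfDilate hm, Nat.card_coe_set_eq, Set.ncard_image_of_injective _
    (smul_intCast_injective _ (inv_ne_zero (Nat.cast_ne_zero.mpr hm)))]

theorem tendsto_finsum_latticePointsOfDilate_div_pow (hPb : Bornology.IsBounded P)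
    (hPm : MeasurableSet P) (hPf : volume (frontier P) = 0) {F : (Fin n → ℝ) → ℝ}
    (hF : Continuous F) :
    Tendsto (fun m : ℕ => (∑ᶠ u ∈ latticePointsOfDilate n P m,
        F ((m : ℝ)⁻¹ • fun i => (u i : ℝ))) / (m : ℝ) ^ n) atTop (𝓝 (∫ x in P, F x)) := by
  refine (tendsto_tsum_div_pow_atTop_integral P F hF hPb hPm hPf).congr' ?_
  filter_upwards [eventually_ne_atTop 0] with m hm
  rw [finsum_latticePointsOfDilate_eq_tsum hPb hm, Fintype.card_fin]

theorem tendsto_ncard_latticePointsOfDilate_div_pow (hPb : Bornology.IsBounded P)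
    (hPm : MeasurableSet P) (hPf : volume (frontier P) = 0) :
    Tendsto (fun m : ℕ => ((latticePointsOfDilate n P m).ncard : ℝ) / (m : ℝ) ^ n) atTop
      (𝓝 (volume.real P)) := by
  refine (tendsto_card_div_pow_atTop_volume P hPb hPm hPf).congr' ?_
  filter_upwards [eventually_ne_atTop 0] with m hm
  rw [ncard_latticePointsOfDilate hm, Fintype.card_fin]

end

theorem map_centroid_eq_setIntegral_div {n : ℕ} {P : Set (Fin n → ℝ)}
    (hP : IntegrableOn (fun x => x) P) (ℓ : (Fin n → ℝ) →ₗ[ℝ] ℝ) :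
    ℓ (centroid n P) = (∫ x in P, ℓ x) / volume.real P := by
  rw [centroid, map_smul, smul_eq_mul, div_eq_inv_mul, measureReal_def,
    ← LinearMap.coe_toContinuousLinearMap' ℓ, ContinuousLinearMap.integral_comp_comm _ hP]

/-- **Averages of a linear functional over lattice points of dilates.**
If `P ⊆ ℝⁿ` is a compact convex set with nonempty interior,
`N_m = #((m • P) ∩ ℤⁿ)`, and `ℓ : ℝⁿ → ℝ` is linear, then
`(1/(m·N_m)) Σ_{u ∈ (m•P) ∩ ℤⁿ} ℓ(u) → ℓ(b(P))`, where `b(P)` is the centroid of `P`. -/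
theorem average_linear_on_lattice_points_tendsto (n : ℕ) (P : Set (Fin n → ℝ))
    (hPcomp : IsCompact P) (hPconv : Convex ℝ P) (hPint : (interior P).Nonempty)
    (ℓ : (Fin n → ℝ) →ₗ[ℝ] ℝ) :
    Tendsto
      (fun m : ℕ =>
        ((m : ℝ) * ((latticePointsOfDilate n P m).ncard : ℝ))⁻¹ *
          ∑ᶠ u ∈ latticePointsOfDilate n P m, ℓ (fun i => (u i : ℝ)))
      atTop (𝓝 (ℓ (centroid n P))) := by
  have hPb := hPcomp.isBounded
  have hPm := hPcomp.isClosed.measurableSet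
  have hPf := hPconv.addHaar_frontier volume
  have hvol : volume.real P ≠ 0 :=
    (measureReal_ne_zero_iff hPcomp.measure_lt_top.ne).mpr
      (Measure.measure_pos_of_nonempty_interior volume hPint).ne'
  have hratio := (tendsto_finsum_latticePointsOfDilate_div_pow hPb hPm hPf
    ℓ.continuous_of_finiteDimensional).div
      (tendsto_ncard_latticePointsOfDilate_div_pow hPb hPm hPf) hvol
  rw [map_centroid_eq_setIntegral_div (continuousOn_id.integrableOn_compact hPcomp) ℓ]
  refine hratio.congr' ?_
  filter_upwards [eventually_ne_atTop 0] with m hm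
  simp_rw [Pi.div_apply, map_smul, smul_eq_mul, ← mul_finsum_mem]
  rw [div_div_div_cancel_right₀ (pow_ne_zero _ (Nat.cast_ne_zero.mpr hm))]
  ring
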